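/- Let Λ̂₁ := U³ ⊕ E8(−2) ⊕ (−2) ⊕ (−2), and let L₀ := f, where e, f is the standard basis of the first copy of U. Let x be any primitive element of the sublattice E8(−2) ⊕ (−2) ⊕ (−2) of Λ̂₁ (i.e. with zero U³-component). Then 2L₀ + x is primitive in Λ̂₁ and there exists an isometry φ ∈ O(Λ̂₁) with φ(2L₀ + x) = x. -/

import Mathlib

open Matrix

section Prelude

variable {ι : Type*} [Fintype ι] [DecidableEq ι]

/-- The bilinear form associated to a Gram matrix `G`. -/
def bf (G : Matrix ι ι ℤ) (x y : ι → ℤ) : ℤ := x ⬝ᵥ G.mulVec y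

/-- `φ` is an isometry of the lattice `(ι → ℤ, bf G)`. -/
def IsIsometry (G : Matrix ι ι ℤ) (φ : (ι → ℤ) ≃ₗ[ℤ] (ι → ℤ)) : Prop :=
  ∀ x y, bf G (φ x) (φ y) = bf G x y

/-- `x` is a primitive lattice vector. -/
def IsPrimitive (x : ι → ℤ) : Prop :=
  x ≠ 0 ∧ ∀ (k : ℤ) (y : ι → ℤ), x = k • y → IsUnit k

/-- `d` is the divisibility of `x`: the positive generator of the ideal `(x, L) ⊆ ℤ`. -/
def HasDiv (G : Matrix ι ι ℤ) (x : ι → ℤ) (d : ℤ) : Prop :=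
  0 < d ∧ (∀ y, d ∣ bf G x y) ∧ ∀ s : ℤ, (∀ y, s ∣ bf G x y) → s ∣ d

/-- The Gram matrix of the hyperbolic plane `U`. -/
def gramU : Matrix (Fin 2) (Fin 2) ℤ := !![0, 1; 1, 0]

/-- The Gram matrix of `E₈(-1)`: the negative of the `E₈` Cartan matrix. -/
def gramE8 : Matrix (Fin 8) (Fin 8) ℤ := - CartanMatrix.E₈

/-- The Gram matrix of `U³`. -/
def gramU3 : Matrix (Fin 2 × Fin 3) (Fin 2 × Fin 3) ℤ :=
  Matrix.blockDiagonal fun _ => gramU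

/-- The Gram matrix of `U(2)³`. -/
def gramU2_3 : Matrix (Fin 2 × Fin 3) (Fin 2 × Fin 3) ℤ :=
  Matrix.blockDiagonal fun _ => (2 : ℤ) • gramU

/-- The subgroup of isometries of the lattice with Gram matrix `G`. -/
def isomGroup (G : Matrix ι ι ℤ) : Subgroup ((ι → ℤ) ≃ₗ[ℤ] (ι → ℤ)) where
  carrier := {φ | IsIsometry G φ}
  one_mem' := fun _ _ => rfl
  mul_mem' := by
    intro a b ha hb x y
    show bf G (a (b x)) (a (b y)) = bf G x y
    rw [ha, hb]
  inv_mem' := by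
    intro a ha x y
    have h := ha (a.symm x) (a.symm y)
    simp only [LinearEquiv.apply_symm_apply] at h
    exact h.symm

/-- Two nonzero lattice vectors span the same ray iff positive multiples agree. -/
def raySetoid (ι : Type*) : Setoid {x : ι → ℤ // x ≠ 0} where
  r x y := ∃ a b : ℤ, 0 < a ∧ 0 < b ∧ a • x.1 = b • y.1
  iseqv := by
    constructor
    · exact fun x => ⟨1, 1, one_pos, one_pos, rfl⟩
    · rintro x y ⟨a, b, ha, hb, h⟩
      exact ⟨b, a, hb, ha, h.symm⟩
    · rintro x y z ⟨a, b, ha, hb, h⟩ ⟨c, d, hc, hd, h'⟩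
      refine ⟨c * a, b * d, mul_pos hc ha, mul_pos hb hd, ?_⟩
      calc (c * a) • x.1 = c • a • x.1 := (smul_smul c a x.1).symm
        _ = c • b • y.1 := by rw [h]
        _ = b • c • y.1 := smul_comm c b y.1
        _ = b • d • z.1 := by rw [h']
        _ = (b * d) • z.1 := smul_smul b d z.1

/-- The set of rays (half-lines spanned by nonzero lattice vectors). -/
def Ray (ι : Type*) := Quotient (raySetoid ι)

/-- The ray spanned by a nonzero lattice vector. -/
def rayMk (x : ι → ℤ) (hx : x ≠ 0) : Ray ι := Quotient.mk (raySetoid ι) ⟨x, hx⟩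

/-- The action of a linear automorphism on rays. -/
def rayMap (φ : (ι → ℤ) ≃ₗ[ℤ] (ι → ℤ)) : Ray ι → Ray ι :=
  Quotient.map (fun p => ⟨φ p.1, fun h => p.2 (by simpa using φ.map_eq_zero_iff.mp h)⟩)
    (by
      rintro x y ⟨a, b, ha, hb, h⟩
      refine ⟨a, b, ha, hb, ?_⟩
      show a • φ x.1 = b • φ y.1
      rw [← _root_.map_smul, ← _root_.map_smul, h])

end Prelude

/-- The index type of `Λ̂₁ = U³ ⊕ E₈(-2) ⊕ (-2) ⊕ (-2)`. -/
abbrev K16 := (Fin 2 × Fin 3) ⊕ (Fin 8 ⊕ (Fin 1 ⊕ Fin 1))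

/-- The Gram matrix of `Λ̂₁ = U³ ⊕ E₈(-2) ⊕ (-2) ⊕ (-2)`. -/
def gram1 : Matrix K16 K16 ℤ :=
  Matrix.fromBlocks gramU3 0 0
    (Matrix.fromBlocks ((2 : ℤ) • gramE8) 0 0 (Matrix.fromBlocks !![-2] 0 0 !![-2]))

/-- The element `L₀ = f`, where `e, f` is the standard basis of the first copy of `U`. -/
def L0 : K16 → ℤ :=
  Sum.elim (fun p => if p = ((1 : Fin 2), (0 : Fin 3)) then 1 else 0) 0


/-!
Since `N = E₈(-1) ⊕ (-1) ⊕ (-1)` is unimodular and `Λ̂₁ = U³ ⊕ N(2)`, a primitive `x ∈ N(2)`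
pairs to `2` with some `a ∈ N(2)`, and `(a, a)` is even. As `f = L₀` is isotropic and orthogonal
to `a`, the Eichler transvection `v ↦ v + (v, f) a - ((v, a) + ½(a, a)(v, f)) f` is an isometry of
`Λ̂₁`; it sends `2f + x` to `2f + x - (2f + x, a) f = x`. A vector mapped to a primitive one by a
linear map is primitive, which gives the primitivity of `2f + x`.
-/

namespace LinearMap.BilinForm

variable {R M : Type*} [CommRing R] [AddCommGroup M] [Module R M]

/-- `m` plays the role of `B a a / 2`, which need not exist in `R`. -/
def eichler (B : LinearMap.BilinForm R M) (e a : M) (m : R) : M →ₗ[R] M :=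
  LinearMap.id + (B.flip e).smulRight a - (B.flip a + m • B.flip e).smulRight e

variable {B : LinearMap.BilinForm R M} {e a : M} {m : R}

theorem eichler_apply (v : M) :
    B.eichler e a m v = v + B v e • a - (B v a + m * B v e) • e := by
  simp [eichler]

theorem eichler_apply_of_apply_eq_zero {v : M} (hv : B v e = 0) :
    B.eichler e a m v = v - B v a • e := by
  rw [eichler_apply, hv]
  module

theorem eichler_apply_left (v w : M) :
    B (B.eichler e a m v) w = B v w + B v e * B a w - (B v a + m * B v e) * B e w := by
  simp [eichler_apply]

theorem eichler_apply_left_isotropic (he : B e e = 0) (hae : B a e = 0) (v : M) :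
    B (B.eichler e a m v) e = B v e := by
  simp [eichler_apply_left, he, hae]

theorem eichler_apply_left_vector (hB : B.IsSymm) (hae : B a e = 0) (ham : B a a = 2 * m) (v : M) :
    B (B.eichler e a m v) a = B v a + 2 * m * B v e := by
  rw [eichler_apply_left, ham, hB.eq e a, hae]
  ring

theorem eichler_eichler_neg (hB : B.IsSymm) (he : B e e = 0) (hae : B a e = 0)
    (ham : B a a = 2 * m) (v : M) : B.eichler e (-a) m (B.eichler e a m v) = v := by
  rw [eichler_apply (a := -a), map_neg, eichler_apply_left_isotropic he hae,
    eichler_apply_left_vector hB hae ham, eichler_apply]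
  module

theorem eichler_eichler_apply (hB : B.IsSymm) (he : B e e = 0) (hae : B a e = 0)
    (ham : B a a = 2 * m) (v w : M) :
    B (B.eichler e a m v) (B.eichler e a m w) = B v w := by
  set w' := B.eichler e a m w
  rw [eichler_apply_left, hB.eq v w', hB.eq a w', hB.eq e w', eichler_apply_left_isotropic he hae,
    eichler_apply_left_vector hB hae ham, eichler_apply_left, hB.eq a v, hB.eq e v, hB.eq w v]
  ring

def eichlerEquiv (hB : B.IsSymm) (he : B e e = 0) (hae : B a e = 0) (ham : B a a = 2 * m) :
    M ≃ₗ[R] M :=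
  .ofLinearMap (B.eichler e a m) (B.eichler e (-a) m)
    (LinearMap.ext fun v => by
      simpa using eichler_eichler_neg (a := -a) hB he (by simpa using hae) (by simpa using ham) v)
    (LinearMap.ext (eichler_eichler_neg hB he hae ham))

@[simp]
theorem coe_eichlerEquiv (hB : B.IsSymm) (he : B e e = 0) (hae : B a e = 0)
    (ham : B a a = 2 * m) : ⇑(eichlerEquiv hB he hae ham) = B.eichler e a m :=
  rfl

end LinearMap.BilinForm

section PrimitiveVectors

variable {ι : Type*}

theorem IsPrimitive.of_map {v : ι → ℤ} (f : (ι → ℤ) →ₗ[ℤ] (ι → ℤ)) (hv : IsPrimitive (f v)) :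
    IsPrimitive v :=
  ⟨fun h => hv.1 (by rw [h, map_zero]), fun k y h => hv.2 k (f y) (by rw [h, map_smul])⟩

open Submodule.IsPrincipal in
theorem IsPrimitive.exists_dotProduct_eq_one [Fintype ι] {x : ι → ℤ} (hx : IsPrimitive x) :
    ∃ c, x ⬝ᵥ c = 1 := by
  set I := Ideal.span (Set.range x)
  have hdvd (i : ι) : generator I ∣ x i :=
    (mem_iff_generator_dvd I).mp (Ideal.subset_span ⟨i, rfl⟩)
  have hunit : IsUnit (generator I) := hx.2 _ (fun i => x i / generator I) <| funext fun i => by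
    simp [Int.mul_ediv_cancel' (hdvd i)]
  obtain ⟨c, hc⟩ := Ideal.mem_span_range_iff_exists_fun.mp <|
    (mem_iff_generator_dvd I).mpr (isUnit_iff_dvd_one.mp hunit)
  exact ⟨c, by simpa [dotProduct, mul_comm] using hc⟩

end PrimitiveVectors

theorem isIsometry_iff_toBilin' {ι : Type*} [Fintype ι] [DecidableEq ι] {G : Matrix ι ι ℤ}
    {φ : (ι → ℤ) ≃ₗ[ℤ] (ι → ℤ)} :
    IsIsometry G φ ↔ ∀ v w, G.toBilin' (φ v) (φ w) = G.toBilin' v w := by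
  simp only [IsIsometry, bf, Matrix.toBilin'_apply']

theorem Matrix.toBilin'_fromBlocks_zero {m n : Type*} [Fintype m] [Fintype n] [DecidableEq m]
    [DecidableEq n] (A : Matrix m m ℤ) (D : Matrix n n ℤ) (v w : m ⊕ n → ℤ) :
    (fromBlocks A 0 0 D).toBilin' v w =
      A.toBilin' (v ∘ Sum.inl) (w ∘ Sum.inl) + D.toBilin' (v ∘ Sum.inr) (w ∘ Sum.inr) := by
  rw [Matrix.toBilin'_apply', fromBlocks_mulVec, ← Sum.elim_comp_inl_inr v,
    sumElim_dotProduct_sumElim]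
  simp [Matrix.toBilin'_apply']

def gramN : Matrix (Fin 8 ⊕ (Fin 1 ⊕ Fin 1)) (Fin 8 ⊕ (Fin 1 ⊕ Fin 1)) ℤ :=
  fromBlocks gramE8 0 0 (fromBlocks !![-1] 0 0 !![-1])

def gramNInv : Matrix (Fin 8 ⊕ (Fin 1 ⊕ Fin 1)) (Fin 8 ⊕ (Fin 1 ⊕ Fin 1)) ℤ :=
  fromBlocks
    !![-4, -5, -7, -10, -8, -6, -4, -2;
       -5, -8, -10, -15, -12, -9, -6, -3;
       -7, -10, -14, -20, -16, -12, -8, -4;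
       -10, -15, -20, -30, -24, -18, -12, -6;
       -8, -12, -16, -24, -20, -15, -10, -5;
       -6, -9, -12, -18, -15, -12, -8, -4;
       -4, -6, -8, -12, -10, -8, -6, -3;
       -2, -3, -4, -6, -5, -4, -3, -2]
    0 0 (fromBlocks !![-1] 0 0 !![-1])

theorem gramN_mul_gramNInv : gramN * gramNInv = 1 := by decide

theorem gram1_eq_fromBlocks : gram1 = fromBlocks gramU3 0 0 ((2 : ℤ) • gramN) := by
  simp [gram1, gramN, fromBlocks_smul]

theorem gram1_isSymm : gram1.IsSymm := by decide

theorem toBilin'_gram1_L0_L0 : gram1.toBilin' L0 L0 = 0 := by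
  rw [Matrix.toBilin'_apply']
  decide

theorem toBilin'_gram1_of_comp_inl_eq_zero {v : K16 → ℤ} (hv : v ∘ Sum.inl = 0) (w : K16 → ℤ) :
    gram1.toBilin' v w = 2 * gramN.toBilin' (v ∘ Sum.inr) (w ∘ Sum.inr) := by
  rw [gram1_eq_fromBlocks, Matrix.toBilin'_fromBlocks_zero, hv, map_smul]
  simp

theorem toBilin'_gram1_L0_of_comp_inl_eq_zero {v : K16 → ℤ} (hv : v ∘ Sum.inl = 0) :
    gram1.toBilin' v L0 = 0 := by
  rw [toBilin'_gram1_of_comp_inl_eq_zero hv, show L0 ∘ Sum.inr = 0 from rfl, map_zero, mul_zero]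

theorem exists_toBilin'_gram1_eq_two {x : K16 → ℤ} (hx0 : x ∘ Sum.inl = 0) (hx : IsPrimitive x) :
    ∃ a : K16 → ℤ, gram1.toBilin' x a = 2 ∧ gram1.toBilin' a L0 = 0 ∧
      ∃ m, gram1.toBilin' a a = 2 * m := by
  obtain ⟨c, hc⟩ := hx.exists_dotProduct_eq_one
  set aN := gramNInv *ᵥ (c ∘ Sum.inr)
  have ha0 : (Sum.elim 0 aN : K16 → ℤ) ∘ Sum.inl = 0 := rfl
  refine ⟨Sum.elim 0 aN, ?_, toBilin'_gram1_L0_of_comp_inl_eq_zero ha0, gramN.toBilin' aN aN,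
    toBilin'_gram1_of_comp_inl_eq_zero ha0 _⟩
  have hc' : (x ∘ Sum.inr) ⬝ᵥ (c ∘ Sum.inr) = 1 := by
    have hx0' (u : Fin 2 × Fin 3) : x (Sum.inl u) = 0 := congrFun hx0 u
    simpa [dotProduct, Fintype.sum_sum_type, hx0'] using hc
  rw [toBilin'_gram1_of_comp_inl_eq_zero hx0, Matrix.toBilin'_apply', Sum.elim_comp_inr,
    mulVec_mulVec, gramN_mul_gramNInv, one_mulVec, hc', mul_one]

/-- Let `x` be a primitive element of the sublattice `E₈(-2) ⊕ (-2) ⊕ (-2)` of `Λ̂₁` (i.e. with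
zero `U³`-component).  Then `2L₀ + x` is primitive in `Λ̂₁` and lies in the same
`O(Λ̂₁)`-orbit as `x`. -/
theorem two_L0_plus_x_in_orbit_of_x (x : K16 → ℤ)
    (hxU : ∀ u : Fin 2 × Fin 3, x (Sum.inl u) = 0) (hxprim : IsPrimitive x) :
    _root_.IsPrimitive (2 • L0 + x) ∧
    ∃ φ : (K16 → ℤ) ≃ₗ[ℤ] (K16 → ℤ), IsIsometry gram1 φ ∧ φ (2 • L0 + x) = x := by
  have hx0 : x ∘ Sum.inl = 0 := funext hxU
  obtain ⟨a, hxa, haL0, m, ham⟩ := exists_toBilin'_gram1_eq_two hx0 hxprim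
  have hB : gram1.toBilin'.IsSymm := Matrix.isSymm_toBilin'_iff_isSymm.mpr gram1_isSymm
  let φ := LinearMap.BilinForm.eichlerEquiv hB toBilin'_gram1_L0_L0 haL0 ham
  have hφ : φ (2 • L0 + x) = x := by
    have hL0 : gram1.toBilin' (2 • L0 + x) L0 = 0 := by
      rw [map_add, map_nsmul, LinearMap.add_apply, LinearMap.smul_apply, toBilin'_gram1_L0_L0,
        toBilin'_gram1_L0_of_comp_inl_eq_zero hx0, smul_zero, zero_add]
    have ha : gram1.toBilin' (2 • L0 + x) a = 2 := by
      rw [map_add, map_nsmul, LinearMap.add_apply, LinearMap.smul_apply, hB.eq L0, haL0, hxa,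
        smul_zero, zero_add]
    rw [LinearMap.BilinForm.coe_eichlerEquiv,
      LinearMap.BilinForm.eichler_apply_of_apply_eq_zero hL0, ha]
    module
  exact ⟨IsPrimitive.of_map φ.toLinearMap (by rwa [LinearEquiv.coe_coe, hφ]), φ,
    isIsometry_iff_toBilin'.mpr
      (LinearMap.BilinForm.eichler_eichler_apply hB toBilin'_gram1_L0_L0 haL0 ham), hφ⟩
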